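/- Let φ : [0,1] → ℝ be a bounded, increasing, convex function with φ(0) = 0, let α ∈ [0,1], and let 1 < p < ∞. Then the weighted translation operator T_{φ,α} on L^p([0,1]) is not supercyclic. -/

import Mathlib

/-!
The weight is nonnegative on `[0,1)` (`φ` increases from `φ 0 = 0`) and `x ↦ {x + α}` preserves
Lebesgue measure on `[0,1]`, so `T^n` moves the values of `f` around and rescales them by
nonnegative reals without changing their phases. Let `K` be a narrow sector around the positive
reals. If `c T^n f ≈ 1` in `L^p`, then `c f ∈ K` outside a set of small measure (Markov); if
`c' T^m f ≈ 𝟙_{[0,1/2]} - 𝟙_{(1/2,1]}`, then by the same estimate `c' f ∈ K` at some point `y₁`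
and `-c' f ∈ K` at some point `y₂` where also `c f ∈ K`. Then the phase of `c' / c` is close to
`0` (at `y₁`) and close to `π` (at `y₂`).
-/

open MeasureTheory Set Filter Topology Polynomial
open scoped ENNReal NNReal

/-- Lebesgue measure restricted to `[0,1]`. -/
noncomputable def μ01 : Measure ℝ := volume.restrict (Set.Icc 0 1)

/-- `T` is the Bishop operator `T_α` on `L^p([0,1])`, i.e.
`(T f)(x) = x · f({x + α})` for a.e. `x ∈ [0,1]`, where `{·}` is the fractional part. -/
def IsBishopOp (p : ℝ≥0∞) [Fact (1 ≤ p)] (α : ℝ)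
    (T : Lp ℂ p μ01 →L[ℂ] Lp ℂ p μ01) : Prop :=
  ∀ f : Lp ℂ p μ01, ∀ᵐ x ∂μ01, (T f) x = (x : ℂ) * f (Int.fract (x + α))

/-- `T` is the weighted translation operator `T_{φ,α}` on `L^p([0,1])`, i.e.
`(T f)(x) = φ(x) · f({x + α})` for a.e. `x ∈ [0,1]`. -/
def IsWTOp (p : ℝ≥0∞) [Fact (1 ≤ p)] (φ : ℝ → ℂ) (α : ℝ)
    (T : Lp ℂ p μ01 →L[ℂ] Lp ℂ p μ01) : Prop :=
  ∀ f : Lp ℂ p μ01, ∀ᵐ x ∂μ01, (T f) x = φ x * f (Int.fract (x + α))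

instance : IsProbabilityMeasure μ01 := ⟨by simp [μ01]⟩

lemma μ01_eq_restrict_Ioc : μ01 = volume.restrict (Ioc 0 (0 + 1)) := by
  rw [zero_add, μ01]
  exact Measure.restrict_congr_set Ioc_ae_eq_Icc.symm

lemma μ01_real_Icc {a b : ℝ} (ha : 0 ≤ a) (hab : a ≤ b) (hb : b ≤ 1) :
    μ01.real (Icc a b) = b - a := by
  rw [μ01, measureReal_restrict_apply measurableSet_Icc,
    inter_eq_left.2 (Icc_subset_Icc ha hb), Real.volume_real_Icc_of_le hab]

lemma μ01_real_Ioc {a b : ℝ} (ha : 0 ≤ a) (hab : a ≤ b) (hb : b ≤ 1) :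
    μ01.real (Ioc a b) = b - a := by
  rw [μ01, measureReal_restrict_apply measurableSet_Ioc,
    inter_eq_left.2 (Ioc_subset_Icc_self.trans (Icc_subset_Icc ha hb)),
    Real.volume_real_Ioc_of_le hab]

lemma ae_fract_eq_self : ∀ᵐ x ∂μ01, Int.fract x = x := by
  rw [μ01, ← Measure.restrict_congr_set Ico_ae_eq_Icc]
  filter_upwards [ae_restrict_mem measurableSet_Ico] with x hx
  exact Int.fract_eq_self.2 hx

lemma measurePreserving_coe_unitAddCircle :
    MeasurePreserving ((↑) : ℝ → UnitAddCircle) μ01 volume :=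
  μ01_eq_restrict_Ioc ▸ UnitAddCircle.measurePreserving_mk 0

lemma measurePreserving_coe_equivIco :
    MeasurePreserving (fun y : UnitAddCircle => (AddCircle.equivIco 1 0 y : ℝ)) volume μ01 := by
  have hmeas : Measurable (fun y : UnitAddCircle => (AddCircle.equivIco 1 0 y : ℝ)) :=
    measurable_subtype_coe.comp (AddCircle.measurableEquivIco 1 0).measurable
  refine ⟨hmeas, ?_⟩
  rw [← measurePreserving_coe_unitAddCircle.map_eq,
    Measure.map_map hmeas measurePreserving_coe_unitAddCircle.measurable]
  simp only [Function.comp_def, AddCircle.coe_equivIco_mk_apply, div_one, mul_one]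
  rw [Measure.map_congr ae_fract_eq_self, Measure.map_id']

/-- `x ↦ {x + β}` is the rotation of the circle `ℝ ⧸ ℤ` read in the coordinate `[0, 1)`. -/
lemma measurePreserving_fract_add (β : ℝ) :
    MeasurePreserving (fun x => Int.fract (x + β)) μ01 μ01 := by
  convert measurePreserving_coe_equivIco.comp ((measurePreserving_add_right volume
    (β : UnitAddCircle)).comp measurePreserving_coe_unitAddCircle) using 1
  ext x
  rw [Function.comp_apply, Function.comp_apply, ← AddCircle.coe_add,
    AddCircle.coe_equivIco_mk_apply, div_one, mul_one]

lemma Int.fract_fract_add {R : Type*} [Ring R] [LinearOrder R] [IsStrictOrderedRing R]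
    [FloorRing R] (a b : R) :
    Int.fract (Int.fract a + b) = Int.fract (a + b) := by
  rw [← Int.fract_add_intCast _ ⌊a⌋, add_right_comm, Int.fract_add_floor]

lemma IsWTOp.pow_apply {p : ℝ≥0∞} [Fact (1 ≤ p)] {φ : ℝ → ℂ} {α : ℝ}
    {T : Lp ℂ p μ01 →L[ℂ] Lp ℂ p μ01} (hT : IsWTOp p φ α T) (n : ℕ) (f : Lp ℂ p μ01) :
    ∀ᵐ x ∂μ01, (T ^ n) f x =
      (∏ k ∈ Finset.range n, φ (Int.fract (x + k * α))) * f (Int.fract (x + n * α)) := by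
  induction n generalizing f with
  | zero =>
    filter_upwards [ae_fract_eq_self] with x hx
    simp [hx]
  | succ n ih =>
    have hTf := (measurePreserving_fract_add (n * α)).quasiMeasurePreserving.ae (hT f)
    filter_upwards [ih (T f), hTf] with x hx hTx
    rw [pow_succ, mul_apply_eq_comp, hx, hTx, Finset.prod_range_succ, Int.fract_fract_add,
      Nat.cast_succ, add_one_mul, ← add_assoc, mul_assoc]

lemma Lp.measureReal_le_norm_apply_le {α E : Type*} [MeasurableSpace α] {μ : Measure α}
    [IsProbabilityMeasure μ] [NormedAddCommGroup E] {p : ℝ≥0∞} [Fact (1 ≤ p)]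
    (F : Lp E p μ) {ε : ℝ} (hε : 0 < ε) :
    μ.real {x | ε ≤ ‖F x‖} ≤ ‖F‖ / ε := by
  have markov := mul_meas_ge_le_pow_eLpNorm' μ one_ne_zero ENNReal.one_ne_top
    (Lp.aestronglyMeasurable F) (ENNReal.ofReal ε)
  have hL1 : eLpNorm F 1 μ ≤ ENNReal.ofReal ‖F‖ := by
    rw [Lp.norm_def, ENNReal.ofReal_toReal (Lp.eLpNorm_ne_top F)]
    exact eLpNorm_le_eLpNorm_of_exponent_le Fact.out (Lp.aestronglyMeasurable F)
  have hset : {x | ENNReal.ofReal ε ≤ ‖F x‖ₑ} = {x | ε ≤ ‖F x‖} := by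
    ext x
    rw [mem_ofPred_eq, ← ofReal_norm, ENNReal.ofReal_le_ofReal_iff (norm_nonneg _), mem_ofPred_eq]
  simp only [ENNReal.toReal_one, ENNReal.rpow_one, hset] at markov
  rw [le_div_iff₀' hε, ← ENNReal.ofReal_le_ofReal_iff (norm_nonneg _),
    ENNReal.ofReal_mul hε.le, ofReal_measureReal]
  exact markov.trans hL1

lemma exists_mem_notMem_notMem_of_measureReal_add_lt {α : Type*} [MeasurableSpace α]
    {μ : Measure α} [IsFiniteMeasure μ] {E X Y : Set α} (h : μ.real X + μ.real Y < μ.real E) :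
    ∃ x ∈ E, x ∉ X ∧ x ∉ Y := by
  by_contra! hcover
  have hsub : E ⊆ X ∪ Y := fun x hx => or_iff_not_imp_left.2 (hcover x hx)
  exact h.not_ge ((measureReal_mono hsub).trans (measureReal_union_le X Y))

/-- The half-angle `arctan (1/3)` is small enough for a product of three elements of the sector
to stay in the right half-plane. -/
def sector : Set ℂ := {z | 0 < z.re ∧ |z.im| ≤ z.re / 3}

lemma measurableSet_sector : MeasurableSet sector :=
  (measurableSet_lt measurable_const Complex.measurable_re).inter
    (measurableSet_le Complex.measurable_im.abs (Complex.measurable_re.div_const 3))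

lemma conj_mem_sector {z : ℂ} (hz : z ∈ sector) : starRingEnd ℂ z ∈ sector := by
  simpa [sector] using hz

lemma re_mul_mul_pos_of_mem_sector {a b c : ℂ} (ha : a ∈ sector) (hb : b ∈ sector)
    (hc : c ∈ sector) : 0 < (a * b * c).re := by
  obtain ⟨ha0, ha⟩ := ha
  obtain ⟨hb0, hb⟩ := hb
  obtain ⟨hc0, hc⟩ := hc
  have hab : |a.im * b.im| ≤ a.re / 3 * (b.re / 3) := by
    rw [abs_mul]; exact mul_le_mul ha hb (abs_nonneg _) (by positivity)
  have hbc : |b.im * c.im| ≤ b.re / 3 * (c.re / 3) := by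
    rw [abs_mul]; exact mul_le_mul hb hc (abs_nonneg _) (by positivity)
  have hac : |a.im * c.im| ≤ a.re / 3 * (c.re / 3) := by
    rw [abs_mul]; exact mul_le_mul ha hc (abs_nonneg _) (by positivity)
  rw [abs_le] at hab hbc hac
  simp only [Complex.mul_re, Complex.mul_im]
  nlinarith [mul_pos (mul_pos ha0 hb0) hc0, mul_le_mul_of_nonneg_right hab.2 hc0.le,
    mul_le_mul_of_nonneg_left hbc.2 ha0.le, mul_le_mul_of_nonneg_right hac.2 hb0.le]

lemma neg_mul_notMem_sector {c c' z z' : ℂ} (h₁ : c * z ∈ sector) (h₂ : c' * z ∈ sector)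
    (h₃ : c * z' ∈ sector) : -(c' * z') ∉ sector := by
  intro h₄
  have hpos := re_mul_mul_pos_of_mem_sector h₂ h₃ (conj_mem_sector h₁)
  have hprod : c' * z * (c * z') * starRingEnd ℂ (c * z) =
      (Complex.normSq (c * z) : ℂ) * (c' * z') := by
    rw [← Complex.mul_conj]; ring
  rw [hprod, Complex.re_ofReal_mul] at hpos
  have hneg := h₄.1
  rw [Complex.neg_re] at hneg
  nlinarith [Complex.normSq_nonneg (c * z)]

lemma mem_sector_of_norm_sub_one_lt {z : ℂ} (h : ‖z - 1‖ < 4⁻¹) : z ∈ sector := by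
  have hre := (abs_le.1 (Complex.abs_re_le_norm (z - 1))).1
  have him := Complex.abs_im_le_norm (z - 1)
  simp only [Complex.sub_re, Complex.one_re, Complex.sub_im, Complex.one_im, sub_zero] at hre him
  exact ⟨by linarith, by linarith⟩

lemma mem_sector_of_ofReal_mul_mem {w : ℝ} (hw : 0 < w) {z : ℂ} (h : (w : ℂ) * z ∈ sector) :
    z ∈ sector := by
  obtain ⟨h0, h⟩ := h
  simp only [Complex.re_ofReal_mul, Complex.im_ofReal_mul, abs_mul, abs_of_pos hw] at h0 h
  exact ⟨pos_of_mul_pos_right h0 hw.le, by nlinarith⟩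

lemma inv_mul_mem_sector_of_norm_ofReal_mul_sub_lt {w : ℝ} (hw : 0 ≤ w) {s z : ℂ}
    (hs : ‖s‖ = 1) (h : ‖(w : ℂ) * z - s‖ < 4⁻¹) : s⁻¹ * z ∈ sector := by
  have hs0 : s ≠ 0 := norm_ne_zero_iff.1 (by simp [hs])
  have hw0 : w ≠ 0 := by
    rintro rfl
    norm_num [hs] at h
  have hnorm : ‖(w : ℂ) * (s⁻¹ * z) - 1‖ = ‖(w : ℂ) * z - s‖ := by
    rw [show (w : ℂ) * (s⁻¹ * z) - 1 = s⁻¹ * ((w : ℂ) * z - s) by field_simp, norm_mul,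
      norm_inv, hs, inv_one, one_mul]
  exact mem_sector_of_ofReal_mul_mem (hw.lt_of_ne' hw0)
    (mem_sector_of_norm_sub_one_lt (hnorm ▸ h))

section WeightedTranslation

variable {p : ℝ≥0∞} [Fact (1 ≤ p)] {φ : ℝ → ℝ} {α : ℝ} {T : Lp ℂ p μ01 →L[ℂ] Lp ℂ p μ01}

lemma IsWTOp.measureReal_inv_mul_notMem_sector_le (hT : IsWTOp p (fun x => (φ x : ℂ)) α T)
    (hφ : ∀ x ∈ Ico (0 : ℝ) 1, 0 ≤ φ x) (f : Lp ℂ p μ01) (c : ℂ) (n : ℕ) {g : Lp ℂ p μ01}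
    {s : ℝ → ℂ} (hs : ∀ x, ‖s x‖ = 1) (hg : g =ᵐ[μ01] s) :
    μ01.real {x | (s x)⁻¹ * (c * f (Int.fract (x + n * α))) ∉ sector} ≤
      4 * ‖c • (T ^ n) f - g‖ := by
  have hbad : {x | (s x)⁻¹ * (c * f (Int.fract (x + n * α))) ∉ sector} ≤ᵐ[μ01]
      {x | 4⁻¹ ≤ ‖(c • (T ^ n) f - g : Lp ℂ p μ01) x‖} := by
    filter_upwards [hT.pow_apply n f, Lp.coeFn_sub (c • (T ^ n) f) g,
      Lp.coeFn_smul c ((T ^ n) f), hg] with x hpow hsub hsmul hgx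
    refine fun hx => not_lt.1 fun hlt => hx ?_
    have hw : 0 ≤ ∏ k ∈ Finset.range n, φ (Int.fract (x + k * α)) :=
      Finset.prod_nonneg fun k _ => hφ _ ⟨Int.fract_nonneg _, Int.fract_lt_one _⟩
    refine inv_mul_mem_sector_of_norm_ofReal_mul_sub_lt hw (hs x) ?_
    rwa [hsub, Pi.sub_apply, hsmul, Pi.smul_apply, hpow, hgx, smul_eq_mul, mul_left_comm,
      ← Complex.ofReal_prod] at hlt
  calc _ ≤ μ01.real {x | 4⁻¹ ≤ ‖(c • (T ^ n) f - g : Lp ℂ p μ01) x‖} :=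
        ENNReal.toReal_mono (measure_ne_top _ _) (measure_mono_ae hbad)
    _ ≤ ‖c • (T ^ n) f - g‖ / 4⁻¹ := Lp.measureReal_le_norm_apply_le _ (by norm_num)
    _ = 4 * ‖c • (T ^ n) f - g‖ := by rw [div_inv_eq_mul, mul_comm]

lemma IsWTOp.measureReal_mul_notMem_sector_le (hT : IsWTOp p (fun x => (φ x : ℂ)) α T)
    (hφ : ∀ x ∈ Ico (0 : ℝ) 1, 0 ≤ φ x) (f : Lp ℂ p μ01) (c : ℂ) (n : ℕ) {g : Lp ℂ p μ01}
    (hg : g =ᵐ[μ01] 1) :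
    μ01.real {y | c * f y ∉ sector} ≤ 4 * ‖c • (T ^ n) f - g‖ := by
  have hmeas : MeasurableSet {y | c * f y ∉ sector} :=
    ((measurable_const.mul (Lp.stronglyMeasurable f).measurable) measurableSet_sector).compl
  rw [← (measurePreserving_fract_add (n * α)).measureReal_preimage hmeas.nullMeasurableSet]
  simpa using hT.measureReal_inv_mul_notMem_sector_le hφ f c n (fun _ => norm_one) hg

end WeightedTranslation

lemma exists_mem_sector_of_measureReal_le {c c' u : ℂ} {g s : ℝ → ℂ} {R : ℝ → ℝ}
    (hR : MeasurePreserving R μ01 μ01) (hA : μ01.real {y | c * g y ∉ sector} ≤ 8⁻¹)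
    (hB : μ01.real {x | (s x)⁻¹ * (c' * g (R x)) ∉ sector} ≤ 8⁻¹) {E : Set ℝ}
    (hE : 4⁻¹ < μ01.real E) (hsE : ∀ x ∈ E, s x = u) :
    ∃ y, c * g y ∈ sector ∧ u⁻¹ * (c' * g y) ∈ sector := by
  have hRA : μ01.real (R ⁻¹' {y | c * g y ∉ sector}) ≤ 8⁻¹ :=
    (ENNReal.toReal_mono (measure_ne_top _ _) (hR.measure_preimage_le _)).trans hA
  obtain ⟨x, hxE, hxA, hxB⟩ := exists_mem_notMem_notMem_of_measureReal_add_lt (E := E)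
    ((add_le_add hRA hB).trans_lt (by linarith))
  simp only [mem_preimage, mem_ofPred_eq, not_not, hsE x hxE] at hxA hxB
  exact ⟨R x, hxA, hxB⟩

noncomputable def signHalf (x : ℝ) : ℂ := if x ∈ Icc 0 2⁻¹ then 1 else -1

lemma norm_signHalf (x : ℝ) : ‖signHalf x‖ = 1 := by
  unfold signHalf
  split_ifs <;> simp

lemma memLp_signHalf (p : ℝ≥0∞) : MemLp signHalf p μ01 :=
  .of_bound (measurable_const.ite measurableSet_Icc measurable_const).aestronglyMeasurable
    1 (.of_forall fun x => (norm_signHalf x).le)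

theorem weighted_translation_not_supercyclic_general
    (φ : ℝ → ℝ)
    (hmono : StrictMonoOn φ (Set.Icc 0 1))
    (h0 : φ 0 = 0)
    (α : ℝ)
    (p : ℝ≥0∞) [Fact (1 ≤ p)]
    (T : Lp ℂ p μ01 →L[ℂ] Lp ℂ p μ01)
    (hT : IsWTOp p (fun x => Complex.ofReal (φ x)) α T) :
    ¬ ∃ f : Lp ℂ p μ01,
      Dense {g : Lp ℂ p μ01 | ∃ (c : ℂ) (n : ℕ), c • (T ^ n) f = g} := by
  rintro ⟨f, hdense⟩
  have hφ : ∀ x ∈ Ico (0 : ℝ) 1, 0 ≤ φ x := fun x hx =>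
    h0 ▸ hmono.monotoneOn (left_mem_Icc.2 zero_le_one) (Ico_subset_Icc_self hx) hx.1
  obtain ⟨_, ⟨c, n, rfl⟩, hcn⟩ := hdense.exists_dist_lt
    ((memLp_const (1 : ℂ)).toLp _ : Lp ℂ p μ01) (by norm_num : (0 : ℝ) < 32⁻¹)
  obtain ⟨_, ⟨c', m, rfl⟩, hcm⟩ :=
    hdense.exists_dist_lt ((memLp_signHalf p).toLp _) (by norm_num : (0 : ℝ) < 32⁻¹)
  rw [dist_comm, dist_eq_norm] at hcn hcm
  have hA := (hT.measureReal_mul_notMem_sector_le hφ f c n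
    (memLp_const (1 : ℂ)).coeFn_toLp).trans (by linarith : _ ≤ (8⁻¹ : ℝ))
  have hB := (hT.measureReal_inv_mul_notMem_sector_le hφ f c' m norm_signHalf
    (memLp_signHalf p).coeFn_toLp).trans (by linarith : _ ≤ (8⁻¹ : ℝ))
  obtain ⟨y₁, h₁, h₁'⟩ := exists_mem_sector_of_measureReal_le (measurePreserving_fract_add _)
    hA hB (by norm_num [μ01_real_Icc]) fun x hx => if_pos hx
  obtain ⟨y₂, h₂, h₂'⟩ := exists_mem_sector_of_measureReal_le (measurePreserving_fract_add _)
    hA hB (E := Ioc 2⁻¹ 1) (by norm_num [μ01_real_Ioc]) fun x hx =>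
      if_neg fun h => hx.1.not_ge h.2
  rw [inv_one, one_mul] at h₁'
  rw [inv_neg, inv_one, neg_one_mul] at h₂'
  exact neg_mul_notMem_sector h₁ h₁' h₂ h₂'

/-- Let `φ : [0,1] → ℝ` be bounded, increasing and convex with `φ(0) = 0`.
For every `α ∈ [0,1]` and `1 < p < ∞`, the weighted translation operator `T_{φ,α}`
on `L^p([0,1])` is not supercyclic. -/
theorem weighted_translation_not_supercyclic
    (φ : ℝ → ℝ) (hbdd : ∃ M : ℝ, ∀ x ∈ Set.Icc (0 : ℝ) 1, |φ x| ≤ M)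
    (hmono : StrictMonoOn φ (Set.Icc 0 1)) (hconv : ConvexOn ℝ (Set.Icc 0 1) φ)
    (h0 : φ 0 = 0)
    (α : ℝ) (hα : α ∈ Set.Icc (0 : ℝ) 1)
    (p : ℝ≥0∞) [Fact (1 ≤ p)] (hp : 1 < p) (hp' : p ≠ ∞)
    (T : Lp ℂ p μ01 →L[ℂ] Lp ℂ p μ01)
    (hT : IsWTOp p (fun x => Complex.ofReal (φ x)) α T) :
    ¬ ∃ f : Lp ℂ p μ01,
      Dense {g : Lp ℂ p μ01 | ∃ (c : ℂ) (n : ℕ), c • (T ^ n) f = g} :=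
  weighted_translation_not_supercyclic_general φ hmono h0 α p T hT
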